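/- Given a constraint network and a total ordering x_1 < … < x_n of its variables, if the network is adaptively consistent with respect to this ordering, then a backtrack-free search is ensured: for every k < n, every consistent instantiation of {x_1, …, x_k} can be extended by a value for x_{k+1} from its domain to a consistent instantiation of {x_1, …, x_{k+1}}. -/

import Mathlib

/-- A constraint: a nonempty scope of variables and a set of allowed tuples
(total assignments whose restriction to the scope determines membership). -/
structure Constraint (V : Type) (α : Type) where
  scope : Finset V
  scope_nonempty : scope.Nonempty
  allowed : Set (V → α)
  allowed_ext : ∀ f g : V → α, (∀ v ∈ scope, f v = g v) → f ∈ allowed → g ∈ allowed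

/-- A constraint network: a finite nonempty domain for each variable and a finite
set of constraints, no two of which have the same scope. -/
structure Network (V : Type) (α : Type) [Fintype V] [DecidableEq V] where
  dom : V → Finset α
  dom_nonempty : ∀ v, (dom v).Nonempty
  cons : Set (Constraint V α)
  cons_finite : cons.Finite
  scope_inj : ∀ c ∈ cons, ∀ c' ∈ cons, c.scope = c'.scope → c = c'

namespace Network

variable {V α : Type} [Fintype V] [DecidableEq V]

/-- `f` is an instantiation of the variables `Y`: each variable of `Y` gets a value
from its domain. -/
def Inst (R : Network V α) (Y : Set V) (f : V → α) : Prop :=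
  ∀ v ∈ Y, f v ∈ R.dom v

/-- `f` is a consistent instantiation of the variables `Y`: it is an instantiation of
`Y` satisfying every constraint whose scope is contained in `Y`. -/
def ConsistentOn (R : Network V α) (Y : Set V) (f : V → α) : Prop :=
  R.Inst Y f ∧ ∀ c ∈ R.cons, (c.scope : Set V) ⊆ Y → f ∈ c.allowed

/-- `R` is `k`-consistent: every consistent instantiation of any `k - 1` distinct
variables extends consistently to any further variable. -/
def KConsistent (R : Network V α) (k : ℕ) : Prop :=
  ∀ (Y : Finset V) (f : V → α), Y.card + 1 = k → R.ConsistentOn ↑Y f →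
    ∀ x ∉ Y, ∃ u ∈ R.dom x,
      R.ConsistentOn ↑(insert x Y) (Function.update f x u)

/-- `R` is strongly `k`-consistent: `j`-consistent for every `j ≤ k`. -/
def StronglyKConsistent (R : Network V α) (k : ℕ) : Prop :=
  ∀ j ≤ k, R.KConsistent j

/-- `R` is globally consistent: strongly `n`-consistent, `n` the number of variables. -/
def GloballyConsistent (R : Network V α) : Prop :=
  R.StronglyKConsistent (Fintype.card V)

/-- The extension set of an instantiation `f` (of `c.scope − {x}`) to `x` with
respect to the constraint `c`: the values `b` of the domain of `x` such that the
extended instantiation satisfies `c`. -/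
def extSet (R : Network V α) (c : Constraint V α) (x : V) (f : V → α) : Set α :=
  {b | b ∈ R.dom x ∧ Function.update f x b ∈ c.allowed}

/-- `c` is a relevant constraint on `x` with respect to `Y`: its scope contains `x`
and its other variables all belong to `Y`. -/
def Relevant (R : Network V α) (c : Constraint V α) (x : V) (Y : Set V) : Prop :=
  c ∈ R.cons ∧ x ∈ c.scope ∧ (↑(c.scope.erase x) : Set V) ⊆ Y

/-- `c` is properly `m`-tight with respect to `x`: every extension set to `x` has at
most `m` elements. -/
def ProperlyTightWrt (R : Network V α) (c : Constraint V α) (x : V) (m : ℕ) : Prop :=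
  ∀ f : V → α, R.Inst ↑(c.scope.erase x) f → (R.extSet c x f).ncard ≤ m

/-- `c` is properly `m`-tight: properly `m`-tight with respect to each of its
variables. -/
def ProperlyTight (R : Network V α) (c : Constraint V α) (m : ℕ) : Prop :=
  ∀ x ∈ c.scope, R.ProperlyTightWrt c x m

/-- `R` (with `n` variables) is weakly `m`-tight at level `k`: for every set `Y` of
`l` variables, `k ≤ l < n`, and every variable `x ∉ Y`, some relevant constraint on
`x` with respect to `Y` is properly `m`-tight. -/
def WeaklyTight (R : Network V α) (m k : ℕ) : Prop :=
  ∀ Y : Finset V, k ≤ Y.card → Y.card < Fintype.card V →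
    ∀ x ∉ Y, ∃ c, R.Relevant c x ↑Y ∧ R.ProperlyTight c m

/-- `R` is tree convex: there is a tree on the union of all the domains under which
every nonempty extension set of every constraint is tree convex (induces a connected
subgraph). -/
def TreeConvexNet (R : Network V α) : Prop :=
  ∃ T : SimpleGraph {a : α // a ∈ ⋃ v, (R.dom v : Set α)},
    T.IsTree ∧
      ∀ c ∈ R.cons, ∀ x ∈ c.scope, ∀ f : V → α,
        R.Inst ↑(c.scope.erase x) f → (R.extSet c x f).Nonempty →
          (T.induce (Subtype.val ⁻¹' R.extSet c x f)).Connected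

/-- `R` is relationally `m`-consistent: for any `m` distinct constraints, any common
variable `x` of their scopes, and any consistent instantiation of the union of their
scopes minus `x`, some value of the domain of `x` extends it to satisfy all `m`
constraints. -/
def RelConsistent (R : Network V α) (m : ℕ) : Prop :=
  ∀ cs : Fin m → Constraint V α, Function.Injective cs →
    (∀ i, cs i ∈ R.cons) → ∀ x : V, (∀ i, x ∈ (cs i).scope) →
      ∀ f : V → α, R.ConsistentOn ((⋃ i, ((cs i).scope : Set V)) \ {x}) f →
        ∃ u ∈ R.dom x, ∀ i, Function.update f x u ∈ (cs i).allowed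

/-- `R` is strongly relationally `m`-consistent. -/
def StronglyRelConsistent (R : Network V α) (m : ℕ) : Prop :=
  ∀ j ≤ m, R.RelConsistent j

end Network

/-- With the variables totally ordered as `Fin n`, the directionally relevant
constraints on a variable `x`: those whose scope contains `x` and otherwise only
variables preceding `x`. -/
def Network.DR {n : ℕ} {α : Type} (R : Network (Fin n) α) (x : Fin n) :
    Set (Constraint (Fin n) α) :=
  {c | c ∈ R.cons ∧ x ∈ c.scope ∧ ∀ v ∈ c.scope, v ≤ x}

/-- A set `Cs` of constraints (from `DR x`), with `S` the set of all variables
occurring in them, is consistent on `x` if every consistent instantiation of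
`S − {x}` extends by a value of the domain of `x` to satisfy all constraints
of `Cs`. -/
def Network.ConsistentOnVar {n : ℕ} {α : Type} (R : Network (Fin n) α)
    (Cs : Set (Constraint (Fin n) α)) (x : Fin n) : Prop :=
  ∀ f : Fin n → α,
    R.ConsistentOn ((⋃ c ∈ Cs, (c.scope : Set (Fin n))) \ {x}) f →
      ∃ u ∈ R.dom x, ∀ c ∈ Cs, Function.update f x u ∈ c.allowed

/-- Backtrack-free search: for every `k < n`, every consistent instantiation of the
first `k` variables extends by a value for the `(k+1)`-st variable from its domain
to a consistent instantiation of the first `k + 1` variables. -/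
def Network.BacktrackFree {n : ℕ} {α : Type} (R : Network (Fin n) α) : Prop :=
  ∀ (k : ℕ) (hk : k < n), ∀ f : Fin n → α,
    R.ConsistentOn {i : Fin n | (i : ℕ) < k} f →
      ∃ u ∈ R.dom ⟨k, hk⟩,
        R.ConsistentOn {i : Fin n | (i : ℕ) < k + 1} (Function.update f ⟨k, hk⟩ u)

/-- The network is adaptively consistent (w.r.t. the ordering of its variables) if
for every variable `x` the whole set `DR x` of directionally relevant constraints on
`x` is consistent on `x`. -/
def Network.AdaptivelyConsistent {n : ℕ} {α : Type} (R : Network (Fin n) α) : Prop :=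
  ∀ x : Fin n, R.ConsistentOnVar (R.DR x) x

theorem Constraint.update_mem_allowed_of_notMem {V α : Type} [DecidableEq V] (c : Constraint V α)
    {x : V} (hx : x ∉ c.scope) {f : V → α} (u : α) (hf : f ∈ c.allowed) :
    Function.update f x u ∈ c.allowed :=
  c.allowed_ext f _ (fun _ hv => (Function.update_of_ne (ne_of_mem_of_not_mem hv hx) u f).symm) hf

namespace Network

section

variable {V α : Type} [Fintype V] [DecidableEq V] {R : Network V α}

theorem ConsistentOn.mono {Y Z : Set V} {f : V → α} (hf : R.ConsistentOn Z f) (hYZ : Y ⊆ Z) :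
    R.ConsistentOn Y f :=
  ⟨fun v hv => hf.1 v (hYZ hv), fun c hc hcY => hf.2 c hc (hcY.trans hYZ)⟩

theorem ConsistentOn.update_insert {Y : Set V} {f : V → α} {x : V} {u : α}
    (hf : R.ConsistentOn Y f) (hu : u ∈ R.dom x)
    (hx : ∀ c ∈ R.cons, x ∈ c.scope → (c.scope : Set V) ⊆ insert x Y →
      Function.update f x u ∈ c.allowed) :
    R.ConsistentOn (insert x Y) (Function.update f x u) := by
  refine ⟨fun v hv => ?_, fun c hc hcY => ?_⟩
  · rcases eq_or_ne v x with rfl | hvx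
    · simpa using hu
    · rw [Function.update_of_ne hvx]
      exact hf.1 v (hv.resolve_left hvx)
  · by_cases hxc : x ∈ c.scope
    · exact hx c hc hxc hcY
    · refine c.update_mem_allowed_of_notMem hxc u (hf.2 c hc fun v hv => ?_)
      exact (hcY hv).resolve_left (ne_of_mem_of_not_mem hv hxc)

end

variable {n : ℕ} {α : Type} {R : Network (Fin n) α}

theorem biUnion_scope_DR_diff_subset_Iio (x : Fin n) :
    (⋃ c ∈ R.DR x, (c.scope : Set (Fin n))) \ {x} ⊆ Set.Iio x := by
  rintro v ⟨hv, hvx⟩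
  obtain ⟨c, hc, hvc⟩ := Set.mem_iUnion₂.mp hv
  exact lt_of_le_of_ne (hc.2.2 v hvc) hvx

theorem AdaptivelyConsistent.exists_update_consistentOn_Iic (hac : R.AdaptivelyConsistent)
    (x : Fin n) {f : Fin n → α} (hf : R.ConsistentOn (Set.Iio x) f) :
    ∃ u ∈ R.dom x, R.ConsistentOn (Set.Iic x) (Function.update f x u) := by
  obtain ⟨u, hu, hDR⟩ := hac x f (hf.mono (biUnion_scope_DR_diff_subset_Iio x))
  refine ⟨u, hu, ?_⟩
  rw [← Set.Iio_insert]
  refine hf.update_insert hu fun c hc hxc hcx => hDR c ⟨hc, hxc, fun v hv => ?_⟩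
  exact le_iff_eq_or_lt.mpr (hcx hv)

end Network

/-- An adaptively consistent constraint network admits backtrack-free search. -/
theorem Network.adaptivelyConsistent_backtrackFree {n : ℕ} {α : Type}
    (R : Network (Fin n) α) (hac : R.AdaptivelyConsistent) :
    R.BacktrackFree := by
  intro k hk f hf
  have hIio : {i : Fin n | (i : ℕ) < k} = Set.Iio ⟨k, hk⟩ := by
    ext i; simp [Fin.lt_def]
  have hIic : {i : Fin n | (i : ℕ) < k + 1} = Set.Iic ⟨k, hk⟩ := by
    ext i; simp [Fin.le_def]
  rw [hIio] at hf
  rw [hIic]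
  exact hac.exists_update_consistentOn_Iic _ hf
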